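/- arXiv:2509.19464 — 6 statements merged into one kernel-verified Lean document; each statement's English description precedes it below -/
import Mathlib

section
/- Let n be a finite nonempty index type, let 𝒱 ⊆ (n → ℝ) be a nonempty set of achievable value vectors, let μ : n → ℝ be the start-state distribution vector, and let M : Matrix n n ℝ be a positive semidefinite matrix (the prediction-error quadratic form). Let 0 ≤ β₁ < β₂. If v₁ ∈ 𝒱 maximizes v ↦ μ ⬝ᵥ v − β₁·(v ⬝ᵥ (M *ᵥ v)) over 𝒱 and v₂ ∈ 𝒱 maximizes v ↦ μ ⬝ᵥ v − β₂·(v ⬝ᵥ (M *ᵥ v)) over 𝒱, then both μ ⬝ᵥ v₂ ≤ μ ⬝ᵥ v₁ and v₂ ⬝ᵥ (M *ᵥ v₂) ≤ v₁ ⬝ᵥ (M *ᵥ v₁). That is, increasing the predictability coefficient β in soft EvA-RL monotonically decreases both the expected return and the squared evaluation error of the resulting solution. -/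
open Matrix

/-!
Compare each maximizer with the other one. Adding the two optimality inequalities makes the
returns cancel and leaves `(β₂ - β₁) (g v₂ - g v₁) ≤ 0`, so the penalty `g` decreases; the
optimality of `v₁` then gives `f v₂ - f v₁ ≤ β₁ (g v₂ - g v₁) ≤ 0`.
-/

section PenalizedMaximizers

variable {α R : Type*} [CommRing R] [LinearOrder R] [IsStrictOrderedRing R]
  {f g : α → R} {s : Set α} {β₁ β₂ : R} {a₁ a₂ : α}

theorem penalty_le_of_isMaxOn_sub_mul (hβ : β₁ < β₂)
    (h₁ : IsMaxOn (fun x ↦ f x - β₁ * g x) s a₁) (h₂ : IsMaxOn (fun x ↦ f x - β₂ * g x) s a₂)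
    (ha₁ : a₁ ∈ s) (ha₂ : a₂ ∈ s) : g a₂ ≤ g a₁ := by
  have key : (β₂ - β₁) * (g a₂ - g a₁) ≤ 0 := by
    linarith [isMaxOn_iff.mp h₁ a₂ ha₂, isMaxOn_iff.mp h₂ a₁ ha₁]
  exact sub_nonpos.mp (nonpos_of_mul_nonpos_right key (sub_pos.mpr hβ))

theorem objective_le_of_isMaxOn_sub_mul (hβ₁ : 0 ≤ β₁) (hβ : β₁ < β₂)
    (h₁ : IsMaxOn (fun x ↦ f x - β₁ * g x) s a₁) (h₂ : IsMaxOn (fun x ↦ f x - β₂ * g x) s a₂)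
    (ha₁ : a₁ ∈ s) (ha₂ : a₂ ∈ s) : f a₂ ≤ f a₁ := by
  have hg : β₁ * (g a₂ - g a₁) ≤ 0 := mul_nonpos_of_nonneg_of_nonpos hβ₁
    (sub_nonpos.mpr (penalty_le_of_isMaxOn_sub_mul hβ h₁ h₂ ha₁ ha₂))
  linarith [isMaxOn_iff.mp h₁ a₂ ha₂]

end PenalizedMaximizers

theorem evaRL_monotonicity_general
    {n : Type*} [Fintype n]
    (𝒱 : Set (n → ℝ))
    (μ : n → ℝ) (M : Matrix n n ℝ)
    (β₁ β₂ : ℝ) (hβ₁ : 0 ≤ β₁) (hβ : β₁ < β₂)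
    (v₁ v₂ : n → ℝ) (hv₁ : v₁ ∈ 𝒱) (hv₂ : v₂ ∈ 𝒱)
    (hmax₁ : ∀ v ∈ 𝒱, μ ⬝ᵥ v - β₁ * (v ⬝ᵥ (M *ᵥ v)) ≤ μ ⬝ᵥ v₁ - β₁ * (v₁ ⬝ᵥ (M *ᵥ v₁)))
    (hmax₂ : ∀ v ∈ 𝒱, μ ⬝ᵥ v - β₂ * (v ⬝ᵥ (M *ᵥ v)) ≤ μ ⬝ᵥ v₂ - β₂ * (v₂ ⬝ᵥ (M *ᵥ v₂))) :
    μ ⬝ᵥ v₂ ≤ μ ⬝ᵥ v₁ ∧ v₂ ⬝ᵥ (M *ᵥ v₂) ≤ v₁ ⬝ᵥ (M *ᵥ v₁) := by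
  have h₁ : IsMaxOn (fun v ↦ μ ⬝ᵥ v - β₁ * (v ⬝ᵥ (M *ᵥ v))) 𝒱 v₁ := isMaxOn_iff.mpr hmax₁
  have h₂ : IsMaxOn (fun v ↦ μ ⬝ᵥ v - β₂ * (v ⬝ᵥ (M *ᵥ v))) 𝒱 v₂ := isMaxOn_iff.mpr hmax₂
  exact ⟨objective_le_of_isMaxOn_sub_mul hβ₁ hβ h₁ h₂ hv₁ hv₂,
    penalty_le_of_isMaxOn_sub_mul hβ h₁ h₂ hv₁ hv₂⟩

/-- Increasing the predictability coefficient `β` in soft EvA-RL monotonically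
decreases both the expected return `μ ⬝ᵥ v` and the squared evaluation error
`v ⬝ᵥ (M *ᵥ v)` of the resulting solution. -/
theorem evaRL_monotonicity
    {n : Type*} [Fintype n] [Nonempty n]
    (𝒱 : Set (n → ℝ)) (h𝒱 : 𝒱.Nonempty)
    (μ : n → ℝ) (M : Matrix n n ℝ) (hM : M.PosSemidef)
    (β₁ β₂ : ℝ) (hβ₁ : 0 ≤ β₁) (hβ : β₁ < β₂)
    (v₁ v₂ : n → ℝ) (hv₁ : v₁ ∈ 𝒱) (hv₂ : v₂ ∈ 𝒱)
    (hmax₁ : ∀ v ∈ 𝒱, μ ⬝ᵥ v - β₁ * (v ⬝ᵥ (M *ᵥ v)) ≤ μ ⬝ᵥ v₁ - β₁ * (v₁ ⬝ᵥ (M *ᵥ v₁)))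
    (hmax₂ : ∀ v ∈ 𝒱, μ ⬝ᵥ v - β₂ * (v ⬝ᵥ (M *ᵥ v)) ≤ μ ⬝ᵥ v₂ - β₂ * (v₂ ⬝ᵥ (M *ᵥ v₂))) :
    μ ⬝ᵥ v₂ ≤ μ ⬝ᵥ v₁ ∧ v₂ ⬝ᵥ (M *ᵥ v₂) ≤ v₁ ⬝ᵥ (M *ᵥ v₁) :=
  evaRL_monotonicity_general 𝒱 μ M β₁ β₂ hβ₁ hβ v₁ v₂ hv₁ hv₂ hmax₁ hmax₂
end

section
/- Let n be a finite index type, Q : Matrix n n ℝ a positive semidefinite matrix, μ : n → ℝ, and β > 0. Suppose v* : n → ℝ maximizes the soft EvA-RL objective v ↦ μ ⬝ᵥ v − β·(v ⬝ᵥ (Q *ᵥ v)) over all of n → ℝ. Then v* maximizes the linear objective v ↦ μ ⬝ᵥ v over the set { v | v ⬝ᵥ (Q *ᵥ v) ≤ v* ⬝ᵥ (Q *ᵥ v*) }; i.e., any solution of the Bellman-relaxed soft-constrained problem with coefficient β solves the Bellman-relaxed hard-constrained problem with ε² equal to the squared prediction error of v*. -/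
open Matrix

/-- Any solution of the Bellman-relaxed soft-constrained problem with
coefficient `β` solves the Bellman-relaxed hard-constrained problem with
`ε²` equal to the squared prediction error of the soft solution. -/
theorem soft_solution_solves_hard
    {n : Type*} [Fintype n]
    (Q : Matrix n n ℝ) (hQ : Q.PosSemidef) (μ : n → ℝ) (β : ℝ) (hβ : 0 < β)
    (vstar : n → ℝ)
    (hmax : ∀ v : n → ℝ,
      μ ⬝ᵥ v - β * (v ⬝ᵥ (Q *ᵥ v)) ≤ μ ⬝ᵥ vstar - β * (vstar ⬝ᵥ (Q *ᵥ vstar))) :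
    ∀ v : n → ℝ, v ⬝ᵥ (Q *ᵥ v) ≤ vstar ⬝ᵥ (Q *ᵥ vstar) → μ ⬝ᵥ v ≤ μ ⬝ᵥ vstar := by
  intro v hv
  have h := hmax v
  nlinarith [mul_le_mul_of_nonneg_left hv hβ.le]
end

section
/- Let n be a finite index type, Q : Matrix n n ℝ a positive semidefinite matrix, μ : n → ℝ, and ε > 0. Suppose v* : n → ℝ maximizes the linear objective v ↦ μ ⬝ᵥ v over the constraint set { v | v ⬝ᵥ (Q *ᵥ v) ≤ ε² }. Then, setting β = (μ ⬝ᵥ v*) / (2·ε²), the vector v* maximizes the soft objective v ↦ μ ⬝ᵥ v − β·(v ⬝ᵥ (Q *ᵥ v)) over all of n → ℝ. -/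
/-!
Write `c = μ ⬝ᵥ v*`; `c ≥ 0` because `0` is feasible. Rescaling any `v` onto the boundary of the
constraint set `{w | wᵀ Q w ≤ ε²}` shows `ε (μ ⬝ᵥ v) ≤ c √(vᵀ Q v)`. By AM–GM this bounds the soft
objective at `v` by `c / 2`, while at the feasible point `v*` it is at least `c / 2`.
-/

open Matrix

/-- When `Q v ≤ 0` the whole ray through `v` is feasible, which forces `f v ≤ 0`. -/
theorem QuadraticMap.mul_le_mul_sqrt_of_forall_le {M : Type*} [AddCommGroup M] [Module ℝ M]
    (Q : QuadraticMap ℝ M ℝ) (f : M →ₗ[ℝ] ℝ) {ε c : ℝ} (hε : 0 < ε)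
    (hf : ∀ v, Q v ≤ ε ^ 2 → f v ≤ c) (v : M) : ε * f v ≤ c * √(Q v) := by
  rcases le_or_gt (Q v) 0 with hQv | hQv
  · have hfv : f v ≤ 0 := by
      by_contra! hfv
      have hfeas : Q (((c + 1) / f v) • v) ≤ ε ^ 2 := by
        rw [Q.map_smul, smul_eq_mul]
        nlinarith [mul_self_nonneg ((c + 1) / f v)]
      have hle := hf _ hfeas
      rw [f.map_smul, smul_eq_mul, div_mul_cancel₀ _ hfv.ne'] at hle
      linarith
    rw [Real.sqrt_eq_zero'.mpr hQv, mul_zero]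
    exact mul_nonpos_of_nonneg_of_nonpos hε.le hfv
  · have hs : 0 < √(Q v) := Real.sqrt_pos.mpr hQv
    have hfeas : Q ((ε / √(Q v)) • v) ≤ ε ^ 2 := by
      rw [Q.map_smul, smul_eq_mul, div_mul_div_comm, Real.mul_self_sqrt hQv.le,
        div_mul_cancel₀ _ hQv.ne', pow_two]
    have hle := hf _ hfeas
    rwa [f.map_smul, smul_eq_mul, div_mul_eq_mul_div, div_le_iff₀ hs] at hle

theorem sub_div_mul_le_sub_div_mul_of_mul_le_mul_sqrt {a c q q' ε : ℝ} (hε : 0 < ε) (hc : 0 ≤ c)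
    (hq : 0 ≤ q) (hq' : q' ≤ ε ^ 2) (h : ε * a ≤ c * √q) :
    a - c / (2 * ε ^ 2) * q ≤ c - c / (2 * ε ^ 2) * q' := by
  have hε2 : 0 < 2 * ε ^ 2 := by positivity
  have hleft : a - c / (2 * ε ^ 2) * q ≤ c / 2 := by
    -- AM–GM: `2 ε √q ≤ ε² + q`
    have hamgm : 2 * ε ^ 2 * a ≤ c * ε ^ 2 + c * q := by
      nlinarith [mul_le_mul_of_nonneg_left h (by positivity : 0 ≤ 2 * ε),
        mul_nonneg hc (sq_nonneg (√q - ε)), Real.sq_sqrt hq]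
    have hsplit : c / 2 + c / (2 * ε ^ 2) * q = (c * ε ^ 2 + c * q) / (2 * ε ^ 2) := by
      field_simp
    rw [sub_le_iff_le_add, hsplit, le_div_iff₀ hε2]
    linarith
  have hright : c / 2 ≤ c - c / (2 * ε ^ 2) * q' := by
    have hβ : c / (2 * ε ^ 2) * ε ^ 2 = c / 2 := by field_simp
    nlinarith [mul_le_mul_of_nonneg_left hq' (div_nonneg hc hε2.le)]
  exact hleft.trans hright

/-- Any solution `v*` of the Bellman-relaxed hard-constrained problem with
bound `ε` solves the Bellman-relaxed soft-constrained problem with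
coefficient `β = (μ ⬝ᵥ v*) / (2 ε²)`. -/
theorem hard_solution_solves_soft
    {n : Type*} [Fintype n]
    (Q : Matrix n n ℝ) (hQ : Q.PosSemidef) (μ : n → ℝ) (ε : ℝ) (hε : 0 < ε)
    (vstar : n → ℝ)
    (hfeas : vstar ⬝ᵥ (Q *ᵥ vstar) ≤ ε ^ 2)
    (hmax : ∀ v : n → ℝ, v ⬝ᵥ (Q *ᵥ v) ≤ ε ^ 2 → μ ⬝ᵥ v ≤ μ ⬝ᵥ vstar) :
    ∀ v : n → ℝ,
      μ ⬝ᵥ v - (μ ⬝ᵥ vstar) / (2 * ε ^ 2) * (v ⬝ᵥ (Q *ᵥ v)) ≤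
      μ ⬝ᵥ vstar - (μ ⬝ᵥ vstar) / (2 * ε ^ 2) * (vstar ⬝ᵥ (Q *ᵥ vstar)) := by
  intro v
  have hc : 0 ≤ μ ⬝ᵥ vstar := by simpa using hmax 0 (by simp; positivity)
  have hbound : ε * (μ ⬝ᵥ v) ≤ (μ ⬝ᵥ vstar) * √(v ⬝ᵥ (Q *ᵥ v)) :=
    QuadraticMap.mul_le_mul_sqrt_of_forall_le
      (LinearMap.BilinMap.toQuadraticMap ((dotProductBilin ℝ ℝ).compl₂ (mulVecLin Q)))
      (dotProductBilin ℝ ℝ μ) hε hmax v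
  exact sub_div_mul_le_sub_div_mul_of_mul_le_mul_sqrt hε hc (hQ.dotProduct_mulVec_nonneg v)
    hfeas hbound
end

section
/- Let n be a finite index type, Q : Matrix n n ℝ a positive semidefinite matrix, μ : n → ℝ, and β > 0. Suppose there exists v₀ with Q *ᵥ v₀ = (1/(2·β)) • μ (so a maximizer of the soft objective exists), and suppose the kernel of Q is nontrivial, i.e., there exists z ≠ 0 with Q *ᵥ z = 0. Then the set of global maximizers of x ↦ μ ⬝ᵥ x − β·(x ⬝ᵥ (Q *ᵥ x)) over n → ℝ is infinite. -/
open Matrix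

/-!
Writing `μ = 2β Q v₀`, the objective satisfies `f v₀ - f y = β (y - v₀)ᵀ Q (y - v₀) ≥ 0`, so `v₀`
is a global maximizer. Since `μ = 2β Q v₀` is orthogonal to `ker Q`, the objective is invariant
under translation by `ker Q`, and the line `t ↦ v₀ + t z` consists of maximizers.
-/

namespace Matrix

variable {n R : Type*} [Fintype n]

theorem IsSymm.dotProduct_mulVec_comm [CommSemiring R] {Q : Matrix n n R} (hQ : Q.IsSymm)
    (a b : n → R) : a ⬝ᵥ (Q *ᵥ b) = b ⬝ᵥ (Q *ᵥ a) := by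
  rw [dotProduct_mulVec, ← mulVec_transpose, hQ.eq, dotProduct_comm]

end Matrix

section SoftObjective

variable {n R : Type*} [Fintype n]

def softObjective [CommRing R] (Q : Matrix n n R) (μ : n → R) (β : R) (x : n → R) : R :=
  μ ⬝ᵥ x - β * (x ⬝ᵥ (Q *ᵥ x))

theorem softObjective_sub_softObjective [CommRing R] {Q : Matrix n n R} (hQ : Q.IsSymm)
    {μ v : n → R} {β : R} (hμ : μ = (2 * β) • (Q *ᵥ v)) (y : n → R) :
    softObjective Q μ β v - softObjective Q μ β y = β * ((y - v) ⬝ᵥ (Q *ᵥ (y - v))) := by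
  have hμ_dot : ∀ x, μ ⬝ᵥ x = 2 * β * (v ⬝ᵥ (Q *ᵥ x)) := fun x => by
    rw [hμ, smul_dotProduct, smul_eq_mul, dotProduct_comm, hQ.dotProduct_mulVec_comm x v]
  simp only [softObjective, hμ_dot, mulVec_sub, dotProduct_sub, sub_dotProduct,
    hQ.dotProduct_mulVec_comm y v]
  ring

theorem softObjective_le_of_smul_mulVec_eq {Q : Matrix n n ℝ} (hQ : Q.PosSemidef)
    {μ v : n → ℝ} {β : ℝ} (hβ : 0 ≤ β) (hμ : μ = (2 * β) • (Q *ᵥ v)) (y : n → ℝ) :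
    softObjective Q μ β y ≤ softObjective Q μ β v := by
  have hQsymm : Q.IsSymm := isHermitian_iff_isSymm.mp hQ.1
  have hquad : 0 ≤ (y - v) ⬝ᵥ (Q *ᵥ (y - v)) := by
    simpa using hQ.dotProduct_mulVec_nonneg (y - v)
  rw [← sub_nonneg, softObjective_sub_softObjective hQsymm hμ y]
  exact mul_nonneg hβ hquad

theorem softObjective_add_of_mulVec_eq_zero [CommRing R] {Q : Matrix n n R} (hQ : Q.IsSymm)
    {μ z : n → R} (β : R) (hQz : Q *ᵥ z = 0) (hμz : μ ⬝ᵥ z = 0) (x : n → R) :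
    softObjective Q μ β (x + z) = softObjective Q μ β x := by
  simp only [softObjective, mulVec_add, hQz, add_zero, dotProduct_add, add_dotProduct, hμz,
    hQ.dotProduct_mulVec_comm z x, dotProduct_zero]

end SoftObjective

/-- If a maximizer of the soft EvA-RL objective exists and `Q` has a
nontrivial kernel, then the set of global maximizers is infinite. -/
theorem soft_maximizers_infinite
    {n : Type*} [Fintype n]
    (Q : Matrix n n ℝ) (hQ : Q.PosSemidef) (μ : n → ℝ) (β : ℝ) (hβ : 0 < β)
    (v₀ : n → ℝ) (hv₀ : Q *ᵥ v₀ = (1 / (2 * β)) • μ)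
    (z : n → ℝ) (hz : z ≠ 0) (hQz : Q *ᵥ z = 0) :
    {x : n → ℝ | ∀ y : n → ℝ,
        μ ⬝ᵥ y - β * (y ⬝ᵥ (Q *ᵥ y)) ≤ μ ⬝ᵥ x - β * (x ⬝ᵥ (Q *ᵥ x))}.Infinite := by
  have hQsymm : Q.IsSymm := isHermitian_iff_isSymm.mp hQ.1
  have hμ : μ = (2 * β) • (Q *ᵥ v₀) := by
    rw [hv₀, smul_smul, mul_one_div_cancel (by positivity), one_smul]
  have hμz : ∀ t : ℝ, μ ⬝ᵥ (t • z) = 0 := fun t => by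
    rw [hμ, dotProduct_smul, smul_dotProduct, dotProduct_comm,
      hQsymm.dotProduct_mulVec_comm, hQz, dotProduct_zero, smul_zero, smul_zero]
  refine Set.infinite_of_injective_forall_mem (f := fun t : ℝ => v₀ + t • z)
    ((add_right_injective v₀).comp (smul_left_injective ℝ hz)) fun t y => ?_
  change softObjective Q μ β y ≤ softObjective Q μ β (v₀ + t • z)
  rw [softObjective_add_of_mulVec_eq_zero hQsymm β (by rw [mulVec_smul, hQz, smul_zero]) (hμz t)]
  exact softObjective_le_of_smul_mulVec_eq hQ hβ.le hμ y
end

section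
/- Let n be a finite index type, Q : Matrix n n ℝ a positive semidefinite matrix, a, y : n → ℝ with Q *ᵥ y = a, and ε ≥ 0. Then for every x : n → ℝ with x ⬝ᵥ (Q *ᵥ x) ≤ ε², we have a ⬝ᵥ x ≤ ε · Real.sqrt (a ⬝ᵥ y). In particular, the optimal value of the problem: maximize a ⬝ᵥ x subject to x ⬝ᵥ (Q *ᵥ x) ≤ ε², is at most ε·√(aᵀy). -/
open Matrix

/-! `(u, v) ↦ u ⬝ᵥ Q *ᵥ v` is a positive semidefinite symmetric bilinear form, and `a ⬝ᵥ x` is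
its value at `(x, y)`; Cauchy–Schwarz for this form bounds it by
`√(x ⬝ᵥ Q *ᵥ x) * √(y ⬝ᵥ Q *ᵥ y) ≤ ε * √(a ⬝ᵥ y)`. -/

lemma Matrix.PosSemidef.sq_dotProduct_mulVec_le {n R : Type*} [Fintype n] [CommRing R]
    [LinearOrder R] [IsStrictOrderedRing R] [StarRing R] [TrivialStar R] {Q : Matrix n n R}
    (hQ : Q.PosSemidef) (x y : n → R) :
    (x ⬝ᵥ Q *ᵥ y) ^ 2 ≤ (x ⬝ᵥ Q *ᵥ x) * (y ⬝ᵥ Q *ᵥ y) := by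
  classical
  have hsymm : (toBilin' Q).IsSymm :=
    isSymm_toBilin'_iff_isSymm.mpr (isHermitian_iff_isSymm.mp hQ.isHermitian)
  simpa only [toBilin'_apply'] using (toBilin' Q).apply_sq_le_of_symm
    (fun v ↦ by simpa [toBilin'_apply'] using hQ.dotProduct_mulVec_nonneg v)
    (LinearMap.BilinForm.isSymm_iff.mp hsymm) x y

lemma Matrix.PosSemidef.dotProduct_mulVec_le_sqrt_mul_sqrt {n : Type*} [Fintype n]
    {Q : Matrix n n ℝ} (hQ : Q.PosSemidef) (x y : n → ℝ) :
    x ⬝ᵥ Q *ᵥ y ≤ √(x ⬝ᵥ Q *ᵥ x) * √(y ⬝ᵥ Q *ᵥ y) := by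
  rw [← Real.sqrt_mul (by simpa using hQ.dotProduct_mulVec_nonneg x)]
  exact Real.le_sqrt_of_sq_le (hQ.sq_dotProduct_mulVec_le x y)

/-- Upper bound on the value of the QCLP: if `Q y = a`, then every `x` with
`xᵀQx ≤ ε²` satisfies `a ⬝ᵥ x ≤ ε √(aᵀy)`. -/
theorem qclp_value_upper_bound
    {n : Type*} [Fintype n]
    (Q : Matrix n n ℝ) (hQ : Q.PosSemidef) (a y : n → ℝ)
    (hy : Q *ᵥ y = a) (ε : ℝ) (hε : 0 ≤ ε) :
    ∀ x : n → ℝ, x ⬝ᵥ (Q *ᵥ x) ≤ ε ^ 2 → a ⬝ᵥ x ≤ ε * Real.sqrt (a ⬝ᵥ y) := by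
  intro x hx
  subst hy
  calc (Q *ᵥ y) ⬝ᵥ x = x ⬝ᵥ Q *ᵥ y := dotProduct_comm _ _
    _ ≤ √(x ⬝ᵥ Q *ᵥ x) * √(y ⬝ᵥ Q *ᵥ y) := hQ.dotProduct_mulVec_le_sqrt_mul_sqrt x y
    _ ≤ ε * √((Q *ᵥ y) ⬝ᵥ y) := by
      rw [dotProduct_comm (Q *ᵥ y)]
      gcongr
      exact Real.sqrt_le_iff.mpr ⟨hε, hx⟩
end

section
/- Let n be a finite index type, Q : Matrix n n ℝ a positive semidefinite matrix, a, y : n → ℝ with Q *ᵥ y = a, and ε ≥ 0. Then ε · Real.sqrt (a ⬝ᵥ y) is the greatest element of the set { t : ℝ | ∃ x : n → ℝ, x ⬝ᵥ (Q *ᵥ x) ≤ ε² ∧ t = a ⬝ᵥ x }; i.e., the optimal value of the quadratically constrained linear program: maximize a ⬝ᵥ x subject to x ⬝ᵥ (Q *ᵥ x) ≤ ε², equals ε·√(aᵀy), and this value is attained. -/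
/-!
Writing `⟪u, v⟫ = u ⬝ᵥ Q *ᵥ v`, symmetry of `Q` turns the objective `a ⬝ᵥ x = (Q *ᵥ y) ⬝ᵥ x`
into `⟪y, x⟫`. Cauchy–Schwarz for the semi-inner product `⟪·, ·⟫` bounds it by
`√⟪y, y⟫ √⟪x, x⟫ ≤ ε √(a ⬝ᵥ y)`, and rescaling `y` to `⟪x, x⟫ = ε²` attains the bound
(take `x = 0` when `⟪y, y⟫ = 0`).
-/

open Matrix

namespace Matrix

variable {n R : Type*} [Fintype n]

theorem IsSymm.mulVec_dotProduct [CommSemiring R] {Q : Matrix n n R} (hQ : Q.IsSymm)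
    (x y : n → R) : (Q *ᵥ x) ⬝ᵥ y = x ⬝ᵥ (Q *ᵥ y) := by
  rw [dotProduct_mulVec, ← mulVec_transpose, hQ.eq]

theorem PosSemidef.dotProduct_mulVec_sq_le [CommRing R] [LinearOrder R]
    [IsStrictOrderedRing R] [StarRing R] [TrivialStar R] {Q : Matrix n n R} (hQ : Q.PosSemidef)
    (x y : n → R) :
    (x ⬝ᵥ (Q *ᵥ y)) ^ 2 ≤ (x ⬝ᵥ (Q *ᵥ x)) * (y ⬝ᵥ (Q *ᵥ y)) := by
  classical
  have hsymm : Q.IsSymm := isHermitian_iff_isSymm.mp hQ.isHermitian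
  have hcs := (toBilin' Q).apply_mul_apply_le_of_forall_zero_le
    (fun v => by simpa [toBilin'_apply'] using hQ.dotProduct_mulVec_nonneg v) x y
  simp only [toBilin'_apply'] at hcs
  rwa [dotProduct_comm y (Q *ᵥ x), hsymm.mulVec_dotProduct, ← sq] at hcs

theorem PosSemidef.dotProduct_mulVec_le_mul_sqrt {Q : Matrix n n ℝ} (hQ : Q.PosSemidef)
    {x : n → ℝ} {ε : ℝ} (hε : 0 ≤ ε) (hx : x ⬝ᵥ (Q *ᵥ x) ≤ ε ^ 2) (y : n → ℝ) :
    y ⬝ᵥ (Q *ᵥ x) ≤ ε * √(y ⬝ᵥ (Q *ᵥ y)) := by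
  have hy : 0 ≤ y ⬝ᵥ (Q *ᵥ y) := by simpa using hQ.dotProduct_mulVec_nonneg y
  rw [← Real.sqrt_sq hε, ← Real.sqrt_mul (sq_nonneg ε)]
  refine Real.le_sqrt_of_sq_le ?_
  calc (y ⬝ᵥ (Q *ᵥ x)) ^ 2 ≤ (y ⬝ᵥ (Q *ᵥ y)) * (x ⬝ᵥ (Q *ᵥ x)) :=
        hQ.dotProduct_mulVec_sq_le y x
    _ ≤ (y ⬝ᵥ (Q *ᵥ y)) * ε ^ 2 := mul_le_mul_of_nonneg_left hx hy
    _ = ε ^ 2 * (y ⬝ᵥ (Q *ᵥ y)) := mul_comm _ _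

theorem smul_dotProduct_mulVec_smul [CommSemiring R] (Q : Matrix n n R) (c : R) (x : n → R) :
    (c • x) ⬝ᵥ (Q *ᵥ (c • x)) = c ^ 2 * (x ⬝ᵥ (Q *ᵥ x)) := by
  rw [mulVec_smul, dotProduct_smul, smul_dotProduct, smul_eq_mul, smul_eq_mul, sq, mul_assoc]

theorem exists_dotProduct_mulVec_le_and_eq (Q : Matrix n n ℝ) (ε : ℝ) (y : n → ℝ) :
    ∃ x : n → ℝ, x ⬝ᵥ (Q *ᵥ x) ≤ ε ^ 2 ∧ y ⬝ᵥ (Q *ᵥ x) = ε * √(y ⬝ᵥ (Q *ᵥ y)) := by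
  set s := √(y ⬝ᵥ (Q *ᵥ y))
  obtain hs | hs := eq_or_ne s 0
  · exact ⟨0, by simpa using sq_nonneg ε, by simp [hs]⟩
  have hys : y ⬝ᵥ (Q *ᵥ y) = s ^ 2 := (Real.sq_sqrt (Real.sqrt_ne_zero'.mp hs).le).symm
  refine ⟨(ε / s) • y, ?_, ?_⟩
  · rw [smul_dotProduct_mulVec_smul, hys, ← mul_pow, div_mul_cancel₀ _ hs]
  · rw [mulVec_smul, dotProduct_smul, smul_eq_mul, hys]
    field_simp

end Matrix

/-- The optimal value of the QCLP `max aᵀx s.t. xᵀQx ≤ ε²` equals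
`ε √(aᵀy)` for any preimage `y` of `a` under `Q`, and it is attained. -/
theorem qclp_optimal_value
    {n : Type*} [Fintype n]
    (Q : Matrix n n ℝ) (hQ : Q.PosSemidef) (a y : n → ℝ)
    (hy : Q *ᵥ y = a) (ε : ℝ) (hε : 0 ≤ ε) :
    IsGreatest {t : ℝ | ∃ x : n → ℝ, x ⬝ᵥ (Q *ᵥ x) ≤ ε ^ 2 ∧ t = a ⬝ᵥ x}
      (ε * Real.sqrt (a ⬝ᵥ y)) := by
  have hsymm : Q.IsSymm := isHermitian_iff_isSymm.mp hQ.isHermitian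
  subst hy
  simp only [hsymm.mulVec_dotProduct]
  obtain ⟨x, hx, hval⟩ := exists_dotProduct_mulVec_le_and_eq Q ε y
  exact ⟨⟨x, hx, hval.symm⟩, fun _ ⟨x, hx, ht⟩ => ht ▸ hQ.dotProduct_mulVec_le_mul_sqrt hε hx y⟩
end
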